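/- arXiv:2504.07712 — 5 statements merged into one kernel-verified Lean document; each statement's English description precedes it below -/
import Mathlib

section
/- Define, for contrast κ < 0 and mesh ratio r > 0, the function f_{κ,r}(t) = (1 + κ·√(r²t²+12)/√(t²+12)) / (1 + √(r²t²+12)/√(t²+12)) for t ≥ 0. If |κ| < 1 and r|κ| > 1, or |κ| > 1 and r|κ| < 1, then f_{κ,r} has exactly one root in [0,∞), namely t* = √(12(1-κ²)/(κ²r²-1)). -/
theorem stmt6 (κ r : ℝ) (hκ : κ < 0) (hr : 0 < r)
    (hcond : (|κ| < 1 ∧ 1 < r * |κ|) ∨ (1 < |κ| ∧ r * |κ| < 1)) :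
    let f : ℝ → ℝ := fun t =>
      (1 + κ * Real.sqrt (r^2*t^2 + 12) / Real.sqrt (t^2 + 12)) /
      (1 + Real.sqrt (r^2*t^2 + 12) / Real.sqrt (t^2 + 12))
    let tstar := Real.sqrt (12*(1 - κ^2)/(κ^2*r^2 - 1))
    f tstar = 0 ∧ ∀ t : ℝ, 0 ≤ t → f t = 0 → t = tstar := by
  intro f tstar
  have hκabs : |κ| = -κ := abs_of_neg hκ
  have key : ∀ t : ℝ, (f t = 0 ↔ t^2 * (κ^2*r^2-1) = 12*(1-κ^2)) := by
    intro t
    have ha : (0:ℝ) < t^2 + 12 := by positivity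
    have hb : (0:ℝ) < r^2*t^2 + 12 := by positivity
    have hsa : 0 < Real.sqrt (t^2+12) := Real.sqrt_pos.2 ha
    have hsb : 0 < Real.sqrt (r^2*t^2+12) := Real.sqrt_pos.2 hb
    have hsa2 : (Real.sqrt (t^2+12))^2 = t^2+12 := Real.sq_sqrt ha.le
    have hsb2 : (Real.sqrt (r^2*t^2+12))^2 = r^2*t^2+12 := Real.sq_sqrt hb.le
    set sa := Real.sqrt (t^2+12) with hsadef
    set sb := Real.sqrt (r^2*t^2+12) with hsbdef
    have hden : 0 < 1 + sb/sa := by positivity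
    show (1 + κ * sb / sa) / (1 + sb / sa) = 0 ↔ _
    rw [div_eq_zero_iff]
    constructor
    · rintro (h | h)
      · have h1 : sa + κ * sb = 0 := by
          field_simp at h
          linarith
        nlinarith [hsa2, hsb2, h1, sq_nonneg (sa - κ * sb)]
      · exact absurd h hden.ne'
    · intro h
      left
      have h2 : sa^2 = (-κ * sb)^2 := by
        rw [hsa2]; nlinarith [hsb2]
      have h1 : sa = -κ * sb := by
        have hnn : 0 ≤ -κ * sb := by nlinarith
        nlinarith [h2, hsa.le, hnn]
      have hne : κ * sb ≠ 0 := mul_ne_zero hκ.ne hsb.ne'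
      rw [h1, neg_mul, div_neg, div_self hne]
      ring
  have hd : κ^2*r^2 - 1 ≠ 0 ∧ 0 ≤ 12*(1 - κ^2)/(κ^2*r^2 - 1) := by
    rcases hcond with ⟨h1, h2⟩ | ⟨h1, h2⟩
    · have hk2 : κ^2 < 1 := by nlinarith [sq_abs κ, abs_nonneg κ]
      have hd' : 0 < κ^2*r^2 - 1 := by nlinarith [sq_abs κ, abs_nonneg κ]
      exact ⟨hd'.ne', le_of_lt (div_pos (by nlinarith) hd')⟩
    · have hk2 : 1 < κ^2 := by nlinarith [sq_abs κ, abs_nonneg κ]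
      have hd' : κ^2*r^2 - 1 < 0 := by nlinarith [sq_abs κ, abs_nonneg κ, mul_nonneg hr.le (abs_nonneg κ)]
      exact ⟨hd'.ne, le_of_lt (div_pos_of_neg_of_neg (by nlinarith) hd')⟩
  obtain ⟨hd0, hc⟩ := hd
  have htstar2 : tstar^2 = 12*(1 - κ^2)/(κ^2*r^2 - 1) := Real.sq_sqrt hc
  have htstar_eq : tstar^2 * (κ^2*r^2-1) = 12*(1-κ^2) := by
    rw [htstar2]; field_simp
  have htstar0 : 0 ≤ tstar := Real.sqrt_nonneg _
  refine ⟨(key tstar).2 htstar_eq, fun t ht hft => ?_⟩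
  have h3 := (key t).1 hft
  have h4 : t^2 = tstar^2 := by
    have := h3.trans htstar_eq.symm
    exact mul_right_cancel₀ hd0 this
  calc t = Real.sqrt (t^2) := (Real.sqrt_sq ht).symm
    _ = Real.sqrt (tstar^2) := by rw [h4]
    _ = tstar := Real.sqrt_sq htstar0
end

section
/- Define f_{κ,r}(t) = (√(t²+12) + κ√(r²t²+12)) / (√(t²+12) + √(r²t²+12)) for t ≥ 0, with κ < 0 and r > 0. If |κ| < 1 and r|κ| < 1, or |κ| > 1 and r|κ| > 1, then |f_{κ,r}(t)| ≥ min{|1+κ|/2, |1+rκ|/(1+r)} > 0 for all t ≥ 0. -/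
set_option maxHeartbeats 1000000 in
theorem stmt7 (κ r : ℝ) (hκ : κ < 0) (hr : 0 < r)
    (hcond : (|κ| < 1 ∧ r * |κ| < 1) ∨ (1 < |κ| ∧ 1 < r * |κ|)) :
    let f : ℝ → ℝ := fun t =>
      (Real.sqrt (t^2 + 12) + κ * Real.sqrt (r^2*t^2 + 12)) /
      (Real.sqrt (t^2 + 12) + Real.sqrt (r^2*t^2 + 12))
    (∀ t : ℝ, 0 ≤ t → min (|1 + κ|/2) (|1 + r*κ|/(1 + r)) ≤ |f t|) ∧
    0 < min (|1 + κ|/2) (|1 + r*κ|/(1 + r)) := by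
  intro f
  have habs : |κ| = -κ := abs_of_neg hκ
  rw [habs] at hcond
  constructor
  · intro t ht
    have ha0 : 0 < Real.sqrt (t^2 + 12) := Real.sqrt_pos.mpr (by positivity)
    have hb0 : 0 < Real.sqrt (r^2*t^2 + 12) := Real.sqrt_pos.mpr (by positivity)
    set a := Real.sqrt (t^2 + 12) with ha
    set b := Real.sqrt (r^2*t^2 + 12) with hb
    have ha2 : a^2 = t^2 + 12 := Real.sq_sqrt (by positivity)
    have hb2 : b^2 = r^2*t^2 + 12 := Real.sq_sqrt (by positivity)
    have hab : 0 < a + b := by linarith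
    show min (|1 + κ|/2) (|1 + r*κ|/(1 + r)) ≤ |(a + κ * b) / (a + b)|
    have hr1 : (0:ℝ) < 1 + r := by linarith
    rcases hcond with ⟨h1, h2⟩ | ⟨h1, h2⟩
    · -- κ > -1, r*κ > -1
      have hk1 : -1 < κ := by linarith
      have hk2 : -1 < r*κ := by nlinarith
      have e1 : |1 + κ| = 1 + κ := abs_of_pos (by linarith)
      have e2 : |1 + r*κ| = 1 + r*κ := abs_of_pos (by linarith)
      rw [e1, e2]
      have key : min ((1+κ)/2) ((1+r*κ)/(1+r)) * (a+b) ≤ a + κ*b := by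
        rcases le_total r 1 with hle | hle
        · have hba : b ≤ a := by
            apply Real.sqrt_le_sqrt
            nlinarith [mul_nonneg (mul_nonneg (sub_nonneg.mpr hle) (by linarith : (0:ℝ) ≤ 1+r)) (sq_nonneg t)]
          have hm : min ((1+κ)/2) ((1+r*κ)/(1+r)) ≤ (1+κ)/2 := min_le_left _ _
          have := mul_le_mul_of_nonneg_right hm hab.le
          nlinarith [mul_nonneg (by linarith : (0:ℝ) ≤ 1 - κ) (sub_nonneg.mpr hba)]
        · have hbra : b ≤ r*a := by
            nlinarith [mul_pos hr ha0, sq_nonneg (r*a - b), sq_nonneg (r*a + b), sq_nonneg (r-1), sq_nonneg (r+1), sq_nonneg t]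
          have hm : min ((1+κ)/2) ((1+r*κ)/(1+r)) ≤ (1+r*κ)/(1+r) := min_le_right _ _
          have h2' : (1+r*κ)/(1+r) * (a+b) ≤ a + κ*b := by
            rw [div_mul_eq_mul_div, div_le_iff₀ hr1]
            nlinarith [mul_nonneg (by linarith : (0:ℝ) ≤ 1 - κ) (sub_nonneg.mpr hbra)]
          calc min ((1+κ)/2) ((1+r*κ)/(1+r)) * (a+b) ≤ (1+r*κ)/(1+r) * (a+b) :=
                mul_le_mul_of_nonneg_right hm hab.le
            _ ≤ a + κ*b := h2'
      have hm0 : 0 ≤ min ((1+κ)/2) ((1+r*κ)/(1+r)) :=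
        le_min (by linarith) (div_nonneg (by linarith) hr1.le)
      have hnum : 0 ≤ a + κ*b := le_trans (by positivity) key
      rw [abs_of_nonneg (div_nonneg hnum hab.le), le_div_iff₀ hab]
      exact key
    · -- κ < -1, r*κ < -1
      have hk1 : κ < -1 := by linarith
      have hk2 : r*κ < -1 := by nlinarith
      have e1 : |1 + κ| = -(1 + κ) := abs_of_neg (by linarith)
      have e2 : |1 + r*κ| = -(1 + r*κ) := abs_of_neg (by linarith)
      rw [e1, e2]
      have key : min (-(1+κ)/2) (-(1+r*κ)/(1+r)) * (a+b) ≤ -(a + κ*b) := by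
        rcases le_total r 1 with hle | hle
        · have hbra : r*a ≤ b := by
            nlinarith [mul_pos hr ha0, sq_nonneg (r*a - b), sq_nonneg (r*a + b), sq_nonneg (r-1), sq_nonneg (r+1), sq_nonneg t]
          have hm : min (-(1+κ)/2) (-(1+r*κ)/(1+r)) ≤ -(1+r*κ)/(1+r) := min_le_right _ _
          have h2' : -(1+r*κ)/(1+r) * (a+b) ≤ -(a + κ*b) := by
            rw [div_mul_eq_mul_div, div_le_iff₀ hr1]
            nlinarith [mul_nonneg (by linarith : (0:ℝ) ≤ 1 - κ) (sub_nonneg.mpr hbra)]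
          calc min (-(1+κ)/2) (-(1+r*κ)/(1+r)) * (a+b) ≤ -(1+r*κ)/(1+r) * (a+b) :=
                mul_le_mul_of_nonneg_right hm hab.le
            _ ≤ -(a + κ*b) := h2'
        · have hba : a ≤ b := by
            apply Real.sqrt_le_sqrt
            nlinarith [mul_nonneg (mul_nonneg (sub_nonneg.mpr hle) (by linarith : (0:ℝ) ≤ 1+r)) (sq_nonneg t)]
          have hm : min (-(1+κ)/2) (-(1+r*κ)/(1+r)) ≤ -(1+κ)/2 := min_le_left _ _
          have := mul_le_mul_of_nonneg_right hm hab.le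
          nlinarith [mul_nonneg (by linarith : (0:ℝ) ≤ 1 - κ) (sub_nonneg.mpr hba)]
      have hm0 : 0 ≤ min (-(1+κ)/2) (-(1+r*κ)/(1+r)) := by
        apply le_min
        · linarith
        · apply div_nonneg (by linarith) hr1.le
      have hnum : a + κ*b ≤ 0 := by
        have h0 : 0 ≤ min (-(1+κ)/2) (-(1+r*κ)/(1+r)) * (a+b) := mul_nonneg hm0 hab.le
        linarith
      rw [abs_of_nonpos (div_nonpos_of_nonpos_of_nonneg hnum hab.le), ← neg_div,
        le_div_iff₀ hab]
      exact key
  · rcases hcond with ⟨h1, h2⟩ | ⟨h1, h2⟩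
    · have hk1 : -1 < κ := by linarith
      have hk2 : -1 < r*κ := by nlinarith
      apply lt_min
      · apply div_pos (abs_pos.mpr (by linarith)) (by norm_num)
      · apply div_pos (abs_pos.mpr (by linarith)) (by linarith)
    · have hk1 : κ < -1 := by linarith
      have hk2 : r*κ < -1 := by nlinarith
      apply lt_min
      · apply div_pos (abs_pos.mpr (by linarith)) (by norm_num)
      · apply div_pos (abs_pos.mpr (by linarith)) (by linarith)
end

section
/- For κ < 0 with κ ≠ -1 and r > 0, the function f_{κ,r}(t) = (√(t²+12) + κ√(r²t²+12)) / (√(t²+12) + √(r²t²+12)) is monotone on [0,∞), with f_{κ,r}(0) = (1+κ)/2 and limit (1+rκ)/(1+r) as t → ∞; consequently f_{κ,r}(t) lies between (1+κ)/2 and (1+rκ)/(1+r) for all t ≥ 0. -/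
open Real Filter

theorem stmt8 (κ r : ℝ) (hκ : κ < 0) (hκ1 : κ ≠ -1) (hr : 0 < r) :
    let f : ℝ → ℝ := fun t =>
      (Real.sqrt (t^2 + 12) + κ * Real.sqrt (r^2*t^2 + 12)) /
      (Real.sqrt (t^2 + 12) + Real.sqrt (r^2*t^2 + 12))
    (MonotoneOn f (Set.Ici 0) ∨ AntitoneOn f (Set.Ici 0)) ∧
    f 0 = (1 + κ)/2 ∧
    Filter.Tendsto f Filter.atTop (nhds ((1 + r*κ)/(1 + r))) ∧
    ∀ t : ℝ, 0 ≤ t →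
      f t ∈ Set.Icc (min ((1 + κ)/2) ((1 + r*κ)/(1 + r)))
                    (max ((1 + κ)/2) ((1 + r*κ)/(1 + r))) := by
  intro f
  have hA : ∀ t : ℝ, 0 < Real.sqrt (t^2 + 12) := fun t =>
    Real.sqrt_pos.2 (by positivity)
  have hB : ∀ t : ℝ, 0 < Real.sqrt (r^2*t^2 + 12) := fun t =>
    Real.sqrt_pos.2 (by positivity)
  set h : ℝ → ℝ := fun x => (1 + κ*x)/(1+x) with hh
  set g : ℝ → ℝ := fun t => Real.sqrt (r^2*t^2+12) / Real.sqrt (t^2+12) with hg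
  have hgpos : ∀ t, 0 < g t := fun t => div_pos (hB t) (hA t)
  have hfg : ∀ t, f t = h (g t) := by
    intro t
    have hA' := (hA t).ne'
    have h1 : (0:ℝ) < 1 + g t := by linarith [hgpos t]
    simp only [hh, hg, f] at *
    rw [div_eq_div_iff (by positivity) h1.ne']
    field_simp
  -- h is antitone on [0, ∞)
  have hmh : ∀ x y : ℝ, 0 ≤ x → x ≤ y → h y ≤ h x := by
    intro x y hx hxy
    simp only [hh]
    rw [div_le_div_iff₀ (by linarith) (by linarith)]
    nlinarith
  -- g as sqrt of a ratio
  have gdiv : ∀ t : ℝ, g t = Real.sqrt ((r^2*t^2+12)/(t^2+12)) := by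
    intro t
    rw [Real.sqrt_div (by positivity)]
  -- g monotone comparisons
  have hgle : ∀ x y : ℝ, 0 ≤ x → x ≤ y → r ≤ 1 → g y ≤ g x := by
    intro x y hx hxy hr1
    rw [gdiv, gdiv]
    apply Real.sqrt_le_sqrt
    rw [div_le_div_iff₀ (by positivity) (by positivity)]
    have hxy2 : x^2 ≤ y^2 := pow_le_pow_left₀ hx hxy 2
    have hkey : 0 ≤ (1 - r^2) * (y^2 - x^2) :=
      mul_nonneg (by nlinarith) (by linarith)
    nlinarith [hkey]
  have hgge : ∀ x y : ℝ, 0 ≤ x → x ≤ y → 1 ≤ r → g x ≤ g y := by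
    intro x y hx hxy hr1
    rw [gdiv, gdiv]
    apply Real.sqrt_le_sqrt
    rw [div_le_div_iff₀ (by positivity) (by positivity)]
    have hxy2 : x^2 ≤ y^2 := pow_le_pow_left₀ hx hxy 2
    have hkey : 0 ≤ (r^2 - 1) * (y^2 - x^2) :=
      mul_nonneg (by nlinarith) (by linarith)
    nlinarith [hkey]
  -- monotonicity of f
  have hmain : (MonotoneOn f (Set.Ici 0) ∨ AntitoneOn f (Set.Ici 0)) := by
    rcases le_total r 1 with hr1 | hr1
    · left
      intro a ha b hb hab
      rw [hfg, hfg]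
      exact hmh (g b) (g a) (hgpos b).le (hgle a b ha hab hr1)
    · right
      intro a ha b hb hab
      rw [hfg, hfg]
      exact hmh (g a) (g b) (hgpos a).le (hgge a b ha hab hr1)
  -- f 0
  have hf0 : f 0 = (1 + κ)/2 := by
    have h12 : (0:ℝ) < Real.sqrt 12 := Real.sqrt_pos.2 (by norm_num)
    simp only [f]
    norm_num
    field_simp
    ring
  -- limit
  have hratio : Filter.Tendsto (fun t : ℝ => (r^2*t^2+12)/(t^2+12)) atTop (nhds (r^2)) := by
    have h1 : Filter.Tendsto (fun t : ℝ => t^2+12) atTop atTop :=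
      tendsto_atTop_add_const_right _ 12 (tendsto_pow_atTop two_ne_zero)
    have h2 : Filter.Tendsto (fun t : ℝ => (12-12*r^2)/(t^2+12)) atTop (nhds 0) :=
      Filter.Tendsto.div_atTop tendsto_const_nhds h1
    have h3 : Filter.Tendsto (fun t : ℝ => r^2 + (12-12*r^2)/(t^2+12)) atTop (nhds (r^2 + 0)) :=
      tendsto_const_nhds.add h2
    rw [add_zero] at h3
    apply h3.congr
    intro t
    have : (0:ℝ) < t^2 + 12 := by positivity
    field_simp
    ring
  have hgt : Filter.Tendsto g atTop (nhds r) := by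
    have := (Real.continuous_sqrt.tendsto (r^2)).comp hratio
    rw [Real.sqrt_sq hr.le] at this
    apply this.congr
    intro t
    exact (gdiv t).symm
  have hht : Filter.Tendsto f atTop (nhds ((1 + r*κ)/(1 + r))) := by
    have hcont : ContinuousAt h r := by
      apply ContinuousAt.div
      · fun_prop
      · fun_prop
      · positivity
    have := hcont.tendsto.comp hgt
    have heq : h r = (1 + r*κ)/(1 + r) := by simp only [hh]; ring_nf
    rw [heq] at this
    apply this.congr
    intro t
    exact (hfg t).symm
  refine ⟨hmain, hf0, hht, ?_⟩
  intro t ht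
  rcases hmain with hm | hm
  · have h1 : f 0 ≤ f t := hm (Set.self_mem_Ici) ht ht
    have h2 : f t ≤ (1 + r*κ)/(1 + r) := by
      apply ge_of_tendsto hht
      filter_upwards [Filter.eventually_ge_atTop t] with s hs
      exact hm ht (le_trans ht hs) hs
    rw [hf0] at h1
    exact ⟨le_trans (min_le_left _ _) h1, le_trans h2 (le_max_right _ _)⟩
  · have h1 : f t ≤ f 0 := hm (Set.self_mem_Ici) ht ht
    have h2 : (1 + r*κ)/(1 + r) ≤ f t := by
      apply le_of_tendsto hht
      filter_upwards [Filter.eventually_ge_atTop t] with s hs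
      exact hm ht (le_trans ht hs) hs
    rw [hf0] at h1
    exact ⟨le_trans (min_le_right _ _) h2, le_trans h1 (le_max_left _ _)⟩
end

section
/- Under the hypothesis |κ| < 1 and r²κ² > 1 + r_y²(1-κ²) (or |κ| > 1 and r²κ² < 1 + r_y²(1-κ²)), the quantity 6r_y²(1-κ²)/((1-κ²r²) - 2r_y²(1-κ²)) lies strictly between -2 and 0. -/
theorem stmt13 (κ r ry : ℝ) (hκ : κ < 0) (hr : 0 < r) (hry : 0 < ry)
    (hcond : (|κ| < 1 ∧ 1 + ry^2*(1 - κ^2) < r^2*κ^2) ∨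
             (1 < |κ| ∧ r^2*κ^2 < 1 + ry^2*(1 - κ^2))) :
    -2 < 6*ry^2*(1 - κ^2)/((1 - κ^2*r^2) - 2*ry^2*(1 - κ^2)) ∧
    6*ry^2*(1 - κ^2)/((1 - κ^2*r^2) - 2*ry^2*(1 - κ^2)) < 0 := by
  rcases hcond with ⟨h1, h2⟩ | ⟨h1, h2⟩
  · have hk2 : κ^2 < 1 := by
      have := abs_lt.mp h1
      nlinarith [this.1, this.2]
    have hD : (1 - κ^2*r^2) - 2*ry^2*(1 - κ^2) < 0 := by nlinarith [sq_nonneg ry]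
    constructor
    · rw [lt_div_iff_of_neg hD]
      nlinarith
    · exact div_neg_of_pos_of_neg (by nlinarith [sq_nonneg ry, mul_pos hry hry]) hD
  · have hk2 : 1 < κ^2 := by
      nlinarith [abs_nonneg κ, sq_abs κ]
    have hD : 0 < (1 - κ^2*r^2) - 2*ry^2*(1 - κ^2) := by nlinarith [mul_pos hry hry]
    constructor
    · rw [lt_div_iff₀ hD]
      nlinarith
    · exact div_neg_of_neg_of_pos (by nlinarith [mul_pos hry hry]) hD
end

section
/- Let κ < 0, r, r_y > 0 with |κ| < 1 and r²κ² < 1 + r_y²(1-κ²), or |κ| > 1 and r²κ² > 1 + r_y²(1-κ²). Then for all s ∈ ℝ, |f_{κ,r}(h_{r_y}(s))| ≥ min{ |1+κ|/2, |√(1+r_y²) + κ√(r²+r_y²)| / (√(1+r_y²) + √(r²+r_y²)) } > 0, where f_{κ,r}(t) = (√(t²+12)+κ√(r²t²+12))/(√(t²+12)+√(r²t²+12)) and h_{r_y}(s) = √((6/r_y²)(1-cos s)/(2+cos s)). -/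
set_option maxHeartbeats 1000000

private lemma mono_aux (κ : ℝ) (hκ1 : κ < 1) :
    ∀ v w : ℝ, 0 < v → v ≤ w → (1+κ*w)/(1+w) ≤ (1+κ*v)/(1+v) := by
  intro v w hv hvw
  rw [div_le_div_iff₀ (by linarith) (by linarith)]
  nlinarith

private lemma key_aux (κ u a : ℝ) (hκ0 : κ < 0) (ha : 0 < a)
    (h1 : min 1 a ≤ u) (h2 : u ≤ max 1 a)
    (hsign : (0 < 1+κ ∧ 0 < 1+κ*a) ∨ (1+κ < 0 ∧ 1+κ*a < 0)) :
    min (|1+κ|/2) (|1+κ*a|/(1+a)) ≤ |1+κ*u|/(1+u) := by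
  have hκ1 : κ < 1 := by linarith
  have hu0 : 0 < u := lt_of_lt_of_le (lt_min one_pos ha) h1
  have h1u : (0:ℝ) < 1+u := by linarith
  have h1a : (0:ℝ) < 1+a := by linarith
  rcases hsign with ⟨hp, hpa⟩ | ⟨hn, hna⟩
  · have hpu : 0 < 1+κ*u := by
      rcases le_total 1 a with h | h
      · have hua : u ≤ a := le_trans h2 (by simp [max_eq_right h])
        nlinarith
      · have hu1 : u ≤ 1 := le_trans h2 (by simp [max_eq_left h])
        nlinarith
    rw [abs_of_pos hpu, abs_of_pos hp, abs_of_pos hpa]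
    rcases le_total 1 a with h | h
    · have hua : u ≤ a := le_trans h2 (by simp [max_eq_right h])
      exact le_trans (min_le_right _ _) (mono_aux κ hκ1 u a hu0 hua)
    · have hu1 : u ≤ 1 := le_trans h2 (by simp [max_eq_left h])
      have h' := mono_aux κ hκ1 u 1 hu0 hu1
      rw [mul_one] at h'
      norm_num at h'
      exact le_trans (min_le_left _ _) h'
  · have hnu : 1+κ*u < 0 := by
      rcases le_total 1 a with h | h
      · have h1u' : 1 ≤ u := le_trans (by simp [min_eq_left h]) h1
        nlinarith
      · have hau : a ≤ u := le_trans (by simp [min_eq_right h]) h1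
        nlinarith
    rw [abs_of_neg hnu, abs_of_neg hn, abs_of_neg hna]
    rcases le_total 1 a with h | h
    · have h1u' : 1 ≤ u := le_trans (by simp [min_eq_left h]) h1
      have h' := mono_aux κ hκ1 1 u one_pos h1u'
      rw [mul_one] at h'
      norm_num at h'
      have : -((1+κ)/2) ≤ -((1+κ*u)/(1+u)) := by linarith
      calc min (-(1+κ)/2) (-(1+κ*a)/(1+a)) ≤ -(1+κ)/2 := min_le_left _ _
        _ ≤ -(1+κ*u)/(1+u) := by rw [neg_div, neg_div]; linarith
    · have hau : a ≤ u := le_trans (by simp [min_eq_right h]) h1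
      have h' := mono_aux κ hκ1 a u ha hau
      calc min (-(1+κ)/2) (-(1+κ*a)/(1+a)) ≤ -(1+κ*a)/(1+a) := min_le_right _ _
        _ ≤ -(1+κ*u)/(1+u) := by rw [neg_div, neg_div]; linarith

theorem stmt14 (κ r ry : ℝ) (hκ : κ < 0) (hr : 0 < r) (hry : 0 < ry)
    (hcond : (|κ| < 1 ∧ r^2*κ^2 < 1 + ry^2*(1 - κ^2)) ∨
             (1 < |κ| ∧ 1 + ry^2*(1 - κ^2) < r^2*κ^2)) :
    let f : ℝ → ℝ := fun t =>
      (Real.sqrt (t^2 + 12) + κ * Real.sqrt (r^2*t^2 + 12)) /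
      (Real.sqrt (t^2 + 12) + Real.sqrt (r^2*t^2 + 12))
    let g : ℝ → ℝ := fun s => Real.sqrt ((6/ry^2) * (1 - Real.cos s)/(2 + Real.cos s))
    (∀ s : ℝ,
      min (|1 + κ|/2)
          (|Real.sqrt (1 + ry^2) + κ * Real.sqrt (r^2 + ry^2)| /
            (Real.sqrt (1 + ry^2) + Real.sqrt (r^2 + ry^2))) ≤ |f (g s)|) ∧
    0 < min (|1 + κ|/2)
          (|Real.sqrt (1 + ry^2) + κ * Real.sqrt (r^2 + ry^2)| /
            (Real.sqrt (1 + ry^2) + Real.sqrt (r^2 + ry^2))) := by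
  intro f g
  set S1 := Real.sqrt (1 + ry^2) with hS1def
  set S2 := Real.sqrt (r^2 + ry^2) with hS2def
  have hS1 : 0 < S1 := Real.sqrt_pos.mpr (by positivity)
  have hS2 : 0 < S2 := Real.sqrt_pos.mpr (by positivity)
  have hS1sq : S1^2 = 1 + ry^2 := Real.sq_sqrt (by positivity)
  have hS2sq : S2^2 = r^2 + ry^2 := Real.sq_sqrt (by positivity)
  set a := S2 / S1 with ha_def
  have ha : 0 < a := div_pos hS2 hS1
  have hea1 : 1 + κ*a = (S1 + κ*S2)/S1 := by
    rw [ha_def, eq_div_iff hS1.ne', add_mul, mul_assoc, div_mul_cancel₀ _ hS1.ne', one_mul]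
  have hea2 : 1 + a = (S1 + S2)/S1 := by
    rw [ha_def, eq_div_iff hS1.ne', add_mul, div_mul_cancel₀ _ hS1.ne', one_mul]
  have hrw : |S1 + κ*S2|/(S1+S2) = |1+κ*a|/(1+a) := by
    rw [hea1, hea2, abs_div, abs_of_pos hS1]
    rw [div_div_div_eq, mul_comm S1 (S1+S2), mul_div_mul_right _ _ (ne_of_gt hS1)]
  -- sign analysis
  have hsign : (0 < 1+κ ∧ 0 < 1+κ*a) ∨ (1+κ < 0 ∧ 1+κ*a < 0) := by
    rcases hcond with ⟨h1, h2⟩ | ⟨h1, h2⟩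
    · rw [abs_of_neg hκ] at h1
      have hnum : 0 < S1 + κ*S2 := by
        have hd : 0 < S1 - κ*S2 := by nlinarith [mul_pos hS2 (neg_pos.mpr hκ)]
        have h3 : κ^2*S2^2 < S1^2 := by rw [hS1sq, hS2sq]; nlinarith
        nlinarith
      left
      refine ⟨by linarith, ?_⟩
      rw [hea1]; exact div_pos hnum hS1
    · rw [abs_of_neg hκ] at h1
      have hnum : S1 + κ*S2 < 0 := by
        have hd : 0 < S1 - κ*S2 := by nlinarith [mul_pos hS2 (neg_pos.mpr hκ)]
        have h3 : S1^2 < κ^2*S2^2 := by rw [hS1sq, hS2sq]; nlinarith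
        nlinarith
      right
      refine ⟨by linarith, ?_⟩
      rw [hea1]
      exact div_neg_of_neg_of_pos hnum hS1
  have hmin_rw : (|S1 + κ*S2|/(S1+S2)) = |1+κ*a|/(1+a) := hrw
  constructor
  · intro s
    set c := Real.cos s with hc_def
    have hc1 : -1 ≤ c := Real.neg_one_le_cos s
    have hc2 : c ≤ 1 := Real.cos_le_one s
    set x := (6/ry^2) * (1 - c)/(2 + c) with hx_def
    have h2c : (0:ℝ) < 2 + c := by linarith
    have hx0 : 0 ≤ x := by
      apply div_nonneg _ h2c.le
      have : (0:ℝ) ≤ 1 - c := by linarith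
      positivity
    have hx12 : ry^2 * x ≤ 12 := by
      have hxe : ry^2 * x = 6*(1-c)/(2+c) := by
        rw [hx_def]; field_simp
      rw [hxe, div_le_iff₀ h2c]; linarith
    have hgs : (g s)^2 = x := Real.sq_sqrt hx0
    set A := Real.sqrt (x + 12) with hA_def
    set B := Real.sqrt (r^2*x + 12) with hB_def
    have hA : 0 < A := Real.sqrt_pos.mpr (by positivity)
    have hB : 0 < B := Real.sqrt_pos.mpr (by positivity)
    have hfg : f (g s) = (1 + κ*(B/A))/(1 + B/A) := by
      show (Real.sqrt ((g s)^2 + 12) + κ * Real.sqrt (r^2*(g s)^2 + 12)) /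
        (Real.sqrt ((g s)^2 + 12) + Real.sqrt (r^2*(g s)^2 + 12)) = _
      rw [hgs, ← hA_def, ← hB_def]
      rw [div_eq_div_iff (by positivity) (by positivity)]
      field_simp
      try ring
    set u := B / A with hu_def
    have hu : 0 < u := div_pos hB hA
    -- bounds on u
    have hbounds : min 1 a ≤ u ∧ u ≤ max 1 a := by
      rcases le_or_gt 1 r with h | h
      · have hr2 : 1 ≤ r^2 := by nlinarith
        have h1u : 1 ≤ u := by
          rw [hu_def, le_div_iff₀ hA, one_mul]
          exact Real.sqrt_le_sqrt (by nlinarith)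
        have hua : u ≤ a := by
          rw [hu_def, ha_def, div_le_div_iff₀ hA hS1]
          rw [hB_def, hS1def, hS2def, hA_def, ← Real.sqrt_mul (by positivity),
            ← Real.sqrt_mul (by positivity)]
          apply Real.sqrt_le_sqrt
          nlinarith [mul_nonneg (by nlinarith : (0:ℝ) ≤ r^2 - 1)
            (by linarith : (0:ℝ) ≤ 12 - ry^2*x)]
        exact ⟨le_trans (min_le_left _ _) h1u, le_trans hua (le_max_right _ _)⟩
      · have hr2 : r^2 ≤ 1 := by nlinarith
        have hu1 : u ≤ 1 := by
          rw [hu_def, div_le_iff₀ hA, one_mul]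
          exact Real.sqrt_le_sqrt (by nlinarith)
        have hau : a ≤ u := by
          rw [hu_def, ha_def, div_le_div_iff₀ hS1 hA]
          rw [hB_def, hS1def, hS2def, hA_def, ← Real.sqrt_mul (by positivity),
            ← Real.sqrt_mul (by positivity)]
          apply Real.sqrt_le_sqrt
          nlinarith [mul_nonneg (by nlinarith : (0:ℝ) ≤ 1 - r^2)
            (by linarith : (0:ℝ) ≤ 12 - ry^2*x)]
        exact ⟨le_trans (min_le_right _ _) hau, le_trans hu1 (le_max_left _ _)⟩
      
    have hkey := key_aux κ u a hκ ha hbounds.1 hbounds.2 hsign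
    have hfabs : |f (g s)| = |1 + κ*u|/(1+u) := by
      rw [hfg, abs_div, abs_of_pos (by linarith : (0:ℝ) < 1 + u)]
    rw [hfabs, hmin_rw]
    exact hkey
  · apply lt_min
    · rcases hsign with ⟨h1, _⟩ | ⟨h1, _⟩
      · rw [abs_of_pos h1]; linarith
      · rw [abs_of_neg h1]; linarith
    · apply div_pos _ (by positivity)
      rcases hsign with ⟨_, h2⟩ | ⟨_, h2⟩
      · rw [hea1] at h2
        have : 0 < S1 + κ*S2 := by
          by_contra hle
          push_neg at hle
          nlinarith [div_nonpos_of_nonpos_of_nonneg hle hS1.le]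
        exact abs_pos.mpr (by linarith)
      · rw [hea1] at h2
        have : S1 + κ*S2 < 0 := by
          by_contra hle
          push_neg at hle
          nlinarith [div_nonneg hle hS1.le]
        exact abs_pos.mpr (by linarith)
end
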